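/- Suppose p satisfies p01·p10 < p11·p00 and let (G_a, G_b) ~ ER(n, p). Then for every ñ and every permutation π ∈ S_{n,ñ}, P[δ(l(π); G_a, G_b) ≤ 0] ≤ exp(−(1/2)·ñ·(n−2)·(√(p11·p00) − √(p01·p10))²). -/

import Mathlib

open Finset

/-- Unordered pairs of distinct vertices of `[n]`. -/
abbrev VPairs (n : ℕ) := {e : Sym2 (Fin n) // ¬ e.IsDiag}

/-- A graph on `[n]`, identified with its edge-indicator function. -/
abbrev VGraph (n : ℕ) := VPairs n → Bool

/-- The permutation of vertex pairs induced by a permutation of vertices. -/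
def pairPerm {n : ℕ} (π : Equiv.Perm (Fin n)) : Equiv.Perm (VPairs n) where
  toFun e := ⟨e.val.map π, fun h => e.prop ((Sym2.isDiag_map π.injective).mp h)⟩
  invFun e := ⟨e.val.map π.symm, fun h => e.prop ((Sym2.isDiag_map π.symm.injective).mp h)⟩
  left_inv e := by
    ext1
    simp [Sym2.map_map]
  right_inv e := by
    ext1
    simp [Sym2.map_map]

/-- Hamming distance between two labelings. -/
def hamming {S : Type*} [Fintype S] [DecidableEq S] (f g : S → Bool) : ℕ :=
  (Finset.univ.filter fun e => f e ≠ g e).card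

/-- `δ(τ; f, g) = (Δ(f∘τ, g) − Δ(f, g))/2`, as a rational number. -/
def deltaQ {S : Type*} [Fintype S] [DecidableEq S] (τ : Equiv.Perm S) (f g : S → Bool) : ℚ :=
  (((hamming (f ∘ τ) g : ℚ)) - (hamming f g : ℚ)) / 2

/-- The entry `(i,j)` of the type `μ(f,g)`. -/
def typeCount {S : Type*} [Fintype S] [DecidableEq S] (f g : S → Bool) (i j : Bool) : ℕ :=
  (Finset.univ.filter fun e => f e = i ∧ g e = j).card

/-- The joint edge distribution determined by a probability vector. -/
def pv (p11 p10 p01 p00 : ℝ) : Bool → Bool → ℝ :=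
  fun a b => if a then (if b then p11 else p10) else (if b then p01 else p00)

open Classical in
/-- The probability of an event under the correlated Erdős–Rényi model `ER(n,p)`. -/
noncomputable def ERprob (n : ℕ) (p : Bool → Bool → ℝ)
    (E : VGraph n × VGraph n → Prop) : ℝ :=
  ∑ gab : VGraph n × VGraph n,
    (if E gab then (1 : ℝ) else 0) * ∏ e : VPairs n, p (gab.1 e) (gab.2 e)

open Classical in
/-- The probability of an event under the joint distribution of a uniformly random
permutation `Π` of `[n]` together with `(G_a, G_b) ~ ER(n,p)` independent of it. -/
noncomputable def ERPermProb (n : ℕ) (p : Bool → Bool → ℝ)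
    (E : Equiv.Perm (Fin n) → VGraph n × VGraph n → Prop) : ℝ :=
  (∑ π : Equiv.Perm (Fin n), ∑ gab : VGraph n × VGraph n,
    (if E π gab then (1 : ℝ) else 0) * ∏ e : VPairs n, p (gab.1 e) (gab.2 e))
    / (Nat.factorial n)

/-- The anonymized graph `G_c`, determined by `G_c(l(Π)(e)) = G_a(e)`. -/
def anonymize {n : ℕ} (π : Equiv.Perm (Fin n)) (ga : VGraph n) : VGraph n :=
  fun e => ga ((pairPerm π).symm e)

/-- `S_{n,nt}`: the permutations of `[n]` with exactly `nt` non-fixed points. -/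
def Snn (n nt : ℕ) : Finset (Equiv.Perm (Fin n)) :=
  Finset.univ.filter fun π => (Finset.univ.filter fun x => π x ≠ x).card = nt

open Classical in
/-- The generating function `A_{S,τ}(w,z)`; here `z^δ` is expressed as `√z^(2δ)`. -/
noncomputable def AgF {S : Type*} [Fintype S] (τ : Equiv.Perm S)
    (w : Bool → Bool → ℝ) (z : ℝ) : ℝ :=
  ∑ g : S → Bool, ∑ h : S → Bool,
    (Real.sqrt z) ^ ((hamming (g ∘ τ) h : ℤ) - (hamming g h : ℤ)) *
      ∏ i : Bool, ∏ j : Bool, w i j ^ typeCount g h i j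

/-- `a_ℓ(w,z)`: the generating function of a single cycle of length `ℓ`. -/
noncomputable def aGF (ℓ : ℕ) (w : Bool → Bool → ℝ) (z : ℝ) : ℝ :=
  AgF (finRotate ℓ) w z

open Classical in
/-- The number of cycles of length `ℓ` in the cycle decomposition of `τ`
(the number of points whose `τ`-orbit has size `ℓ`, divided by `ℓ`). -/
noncomputable def cycleCount {S : Type*} [Fintype S] (τ : Equiv.Perm S) (ℓ : ℕ) : ℕ :=
  (Finset.univ.filter fun x : S =>
    (Finset.univ.filter fun y : S => τ.SameCycle x y).card = ℓ).card / ℓ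

open Classical in
/-- The probability of an event under an Erdős–Rényi graph `G(n,p)`. -/
noncomputable def ERgraphProb (n : ℕ) (p : ℝ) (E : VGraph n → Prop) : ℝ :=
  ∑ g : VGraph n,
    (if E g then (1 : ℝ) else 0) * ∏ e : VPairs n, (if g e then p else 1 - p)

open Classical in
/-- The number of automorphisms of a graph. -/
noncomputable def autCard {n : ℕ} (g : VGraph n) : ℕ :=
  (Finset.univ.filter fun π : Equiv.Perm (Fin n) =>
    ∀ e : VPairs n, g (pairPerm π e) = g e).card

/-! Chernoff bound: for `0 < z ≤ 1` the indicator of `δ ≤ 0` is at most `z ^ (2δ)`, and the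
expectation of `z ^ (2δ)` factorises along the permutation `τ = l(π)` of vertex pairs. Summing
out `G_b` leaves `∑_{G_a} ∏_e M (G_a e) (G_a (τ e))` for a tilted 2 × 2 transfer matrix `M` of
trace 1, and this is the product over the cycles of `τ` of `tr M ^ ℓ = λ₁ ^ ℓ + λ₂ ^ ℓ`. Fixed
pairs contribute `1`, a cycle of length `ℓ ≥ 2` at most `(λ₁² + λ₂²) ^ (ℓ / 2)`, where
`λ₁² + λ₂² = 1 - 2 det M`, and for `p01 p10 > 0` the choice `z ^ 2 = √(p01 p10 / (p11 p00))` makes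
`det M = (√(p11 p00) - √(p01 p10)) ^ 2`. Finally, `l(π)` moves at least `ñ (n - 2) / 2` pairs. -/

namespace Equiv.Perm

theorem SameCycle.apply_eq_apply_of_invariant {S β : Type*} [Finite S] {τ : Perm S}
    {ε : S → β} (hε : ∀ x, ε (τ x) = ε x) {x y : S} (h : τ.SameCycle x y) : ε x = ε y := by
  obtain ⟨k, rfl⟩ := h.exists_nat_pow_eq
  clear h
  induction k with
  | zero => rfl
  | succ k ih => rw [ih, pow_succ', mul_apply, hε]

end Equiv.Perm

section Transfer

variable {S α ι R : Type*} [Fintype S] [DecidableEq S] [Fintype α] [Fintype ι] [DecidableEq ι]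
  [CommSemiring R]

theorem sum_prod_apply_perm_eq_sum_invariant (τ : Equiv.Perm S) (M : α → α → R) (l : ι → R)
    (u w : ι → α → R) (hM : ∀ a b, M a b = ∑ j, l j * u j a * w j b)
    (horth : ∀ j k, ∑ a, u j a * w k a = if k = j then 1 else 0) :
    ∑ f : S → α, ∏ x, M (f x) (f (τ x))
      = ∑ ε : S → ι with ∀ x, ε (τ x) = ε x, ∏ x, l (ε x) := by
  -- after expanding `M`, the sum over `f` factorises over `x` and biorthogonality of `u` and `w`
  -- leaves exactly the labellings `ε` with `ε (τ⁻¹ x) = ε x`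
  have hshift (ε : S → ι) (f : S → α) :
      ∏ x, l (ε x) * u (ε x) (f x) * w (ε x) (f (τ x))
        = (∏ x, l (ε x)) * ∏ x, u (ε x) (f x) * w (ε (τ⁻¹ x)) (f x) := by
    rw [prod_mul_distrib, prod_mul_distrib, prod_mul_distrib, mul_assoc,
      ← Equiv.prod_comp τ (fun x => w (ε (τ⁻¹ x)) (f x))]
    simp
  have hinv (ε : S → ι) : (∀ x, ε (τ⁻¹ x) = ε x) ↔ ∀ x, ε (τ x) = ε x := by
    rw [← τ.forall_congr_right]
    simp [eq_comm]
  calc ∑ f : S → α, ∏ x, M (f x) (f (τ x))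
      = ∑ ε : S → ι, ∑ f : S → α, ∏ x, l (ε x) * u (ε x) (f x) * w (ε x) (f (τ x)) := by
        simp_rw [hM, Fintype.prod_sum]
        exact sum_comm
    _ = ∑ ε : S → ι, (∏ x, l (ε x)) * ∏ x, ∑ a, u (ε x) a * w (ε (τ⁻¹ x)) a := by
        simp_rw [hshift, ← mul_sum, Fintype.prod_sum]
    _ = ∑ ε : S → ι with ∀ x, ε (τ x) = ε x, ∏ x, l (ε x) := by
        simp_rw [horth, Fintype.prod_boole, hinv, mul_ite, mul_one, mul_zero, sum_ite,
          sum_const_zero, add_zero]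

end Transfer

theorem sum_pow_le_pow_of_sum_sq_le {ι : Type*} [Fintype ι] {l : ι → ℝ} {ρ : ℝ}
    (hl : ∀ j, 0 ≤ l j) (hρ : 0 ≤ ρ) (hl2 : ∑ j, l j ^ 2 ≤ ρ ^ 2) {m : ℕ} (hm : 2 ≤ m) :
    ∑ j, l j ^ m ≤ ρ ^ m := by
  obtain ⟨k, rfl⟩ := Nat.exists_eq_add_of_le' hm
  have hlρ (j : ι) : l j ≤ ρ :=
    (pow_le_pow_iff_left₀ (hl j) hρ two_ne_zero).mp
      ((single_le_sum (fun i _ => sq_nonneg (l i)) (mem_univ j)).trans hl2)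
  calc ∑ j, l j ^ (k + 2) ≤ ∑ j, ρ ^ k * l j ^ 2 := by
        gcongr with j
        rw [pow_add]
        exact mul_le_mul_of_nonneg_right (pow_le_pow_left₀ (hl j) (hlρ j) k) (sq_nonneg _)
    _ ≤ ρ ^ (k + 2) := by
        rw [← mul_sum, pow_add]
        gcongr

section Cycles

open Equiv.Perm
open scoped Classical

variable {S ι : Type*} [Fintype S] [DecidableEq S] [Fintype ι]

theorem sum_invariant_prod_eq_prod_cycles [DecidableEq ι] {R : Type*} [CommSemiring R]
    (τ : Equiv.Perm S) (l : ι → R) :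
    ∑ ε : S → ι with ∀ x, ε (τ x) = ε x, ∏ x, l (ε x)
      = ∏ c : Quotient (SameCycle.setoid τ),
          ∑ j, l j ^ #{x | Quotient.mk (SameCycle.setoid τ) x = c} := by
  set κ := Quotient.mk (SameCycle.setoid τ)
  have hκ (x : S) : τ.SameCycle (κ x).out x := Quotient.exact (Quotient.out_eq (κ x))
  have hlift : ∑ ε : S → ι with ∀ x, ε (τ x) = ε x, ∏ x, l (ε x)
      = ∑ h : Quotient (SameCycle.setoid τ) → ι, ∏ x, l (h (κ x)) := by
    refine sum_nbij' (fun ε c => ε c.out) (fun h x => h (κ x)) (by simp) ?_ ?_ ?_ ?_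
    · simp only [mem_filter, mem_univ, true_and]
      exact fun h _ x => congrArg h (Quotient.sound (SameCycle.refl τ x).apply_right).symm
    · intro ε hε
      simp only [mem_filter, mem_univ, true_and] at hε
      exact funext fun x => (hκ x).apply_eq_apply_of_invariant hε
    · exact fun h _ => funext fun c => congrArg h (Quotient.out_eq c)
    · intro ε hε
      simp only [mem_filter, mem_univ, true_and] at hε
      exact prod_congr rfl fun x _ => congrArg l ((hκ x).apply_eq_apply_of_invariant hε).symm
  have hfiber (h : Quotient (SameCycle.setoid τ) → ι) :
      ∏ x, l (h (κ x)) = ∏ c, l (h c) ^ #{x | κ x = c} := by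
    rw [← prod_fiberwise univ κ]
    exact prod_congr rfl fun c _ => prod_eq_pow_card fun x hx => by rw [(mem_filter.mp hx).2]
  rw [hlift, Fintype.prod_sum]
  exact sum_congr rfl fun h _ => hfiber h

variable {l : ι → ℝ} {ρ : ℝ}

theorem sum_pow_card_cycle_le (τ : Equiv.Perm S) (hl : ∀ j, 0 ≤ l j) (hl1 : ∑ j, l j = 1)
    (hρ : 0 ≤ ρ) (hl2 : ∑ j, l j ^ 2 ≤ ρ ^ 2) (c : Quotient (SameCycle.setoid τ)) :
    ∑ j, l j ^ #{x | Quotient.mk (SameCycle.setoid τ) x = c}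
      ≤ ρ ^ #{x ∈ τ.support | Quotient.mk (SameCycle.setoid τ) x = c} := by
  set κ := Quotient.mk (SameCycle.setoid τ)
  have hc (x : S) (hx : κ x = c) : τ.SameCycle c.out x :=
    Quotient.exact ((Quotient.out_eq c).trans hx.symm)
  by_cases hfix : τ c.out = c.out
  · have hsingle : univ.filter (κ · = c) = {c.out} := by
      ext x
      simp only [mem_filter, mem_univ, true_and, mem_singleton]
      exact ⟨fun hx => ((hc x hx).eq_of_left hfix).symm, fun hx => hx ▸ Quotient.out_eq c⟩
    have hmoved : τ.support.filter (κ · = c) = ∅ := by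
      refine filter_eq_empty_iff.mpr fun x hx hxc => mem_support.mp hx ?_
      exact (hc x hxc).apply_eq_self_iff.mp hfix
    simp [hsingle, hmoved, hl1]
  · have hmoved : τ.support.filter (κ · = c) = univ.filter (κ · = c) := by
      ext x
      simp only [mem_filter, mem_univ, true_and, mem_support, and_iff_right_iff_imp]
      exact fun hx hfx => hfix ((hc x hx).apply_eq_self_iff.mpr hfx)
    have hcard : 2 ≤ #{x | κ x = c} := by
      refine one_lt_card.mpr ⟨c.out, ?_, τ c.out, ?_, Ne.symm hfix⟩ <;>
        simp only [mem_filter, mem_univ, true_and]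
      · exact Quotient.out_eq c
      · exact (Quotient.sound (SameCycle.refl τ c.out).apply_left).trans (Quotient.out_eq c)
    rw [hmoved]
    exact sum_pow_le_pow_of_sum_sq_le hl hρ hl2 hcard

theorem sum_invariant_prod_le [DecidableEq ι] (τ : Equiv.Perm S) (hl : ∀ j, 0 ≤ l j)
    (hl1 : ∑ j, l j = 1) (hρ : 0 ≤ ρ) (hl2 : ∑ j, l j ^ 2 ≤ ρ ^ 2) :
    ∑ ε : S → ι with ∀ x, ε (τ x) = ε x, ∏ x, l (ε x) ≤ ρ ^ #τ.support := by
  rw [sum_invariant_prod_eq_prod_cycles,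
    card_eq_sum_card_fiberwise (f := Quotient.mk (SameCycle.setoid τ)) (t := univ) (by simp),
    ← prod_pow_eq_pow_sum]
  exact prod_le_prod (fun c _ => sum_nonneg fun j _ => pow_nonneg (hl j) _)
    fun c _ => sum_pow_card_cycle_le τ hl hl1 hρ hl2 c

end Cycles

def det2 (M : Bool → Bool → ℝ) : ℝ := M true true * M false false - M true false * M false true

theorem exists_eigen_decomposition (M : Bool → Bool → ℝ) (htr : M true true + M false false = 1)
    (hoff : 0 < M true false * M false true) (hdet : 0 ≤ det2 M) :
    ∃ (l : Bool → ℝ) (u w : Bool → Bool → ℝ),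
      (∀ a b, M a b = ∑ j, l j * u j a * w j b) ∧
      (∀ j k, ∑ a, u j a * w k a = if k = j then 1 else 0) ∧
      (∀ j, 0 ≤ l j) ∧ ∑ j, l j = 1 ∧
      ∑ j, l j ^ 2 = 1 - 2 * det2 M := by
  obtain ⟨α, β, γ, δ, rfl⟩ : ∃ α β γ δ : ℝ,
      M = fun a b => if a then (if b then α else β) else (if b then γ else δ) :=
    ⟨_, _, _, _, by ext a b; cases a <;> cases b <;> rfl⟩
  simp only [det2, if_true, Bool.false_eq_true, if_false] at htr hoff hdet ⊢
  obtain ⟨l₁, l₂, hsum, hprod, hl₂, hlt⟩ :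
      ∃ l₁ l₂ : ℝ, l₁ + l₂ = 1 ∧ l₁ * l₂ = α * δ - β * γ ∧ 0 ≤ l₂ ∧ l₂ < l₁ := by
    have hd4 : 0 < 1 - 4 * (α * δ - β * γ) := by nlinarith [sq_nonneg (α - δ)]
    have hs0 := Real.sqrt_pos.mpr hd4
    have hs2 := Real.sq_sqrt hd4.le
    exact ⟨(1 + √(1 - 4 * (α * δ - β * γ))) / 2, (1 - √(1 - 4 * (α * δ - β * γ))) / 2,
      by ring, by linear_combination (-1 / 4 : ℝ) * hs2, by nlinarith, by linarith⟩
  have hroot : (l₁ - α) * (l₂ - α) = -(β * γ) := by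
    linear_combination hprod - α * hsum + α * htr
  have h₁ : l₁ - α ≠ 0 := fun h => by rw [h, zero_mul] at hroot; linarith
  have h₂ : l₂ - α ≠ 0 := fun h => by rw [h, mul_zero] at hroot; linarith
  have h₁₂ : l₁ - l₂ ≠ 0 := by linarith
  have h₂₁ : l₂ - l₁ ≠ 0 := by linarith
  -- `u j` and `w j` are right and left eigenvectors for the eigenvalue `l j`, scaled so that
  -- `∑ a, u j a * w j a = 1`
  refine ⟨fun j => if j then l₁ else l₂, fun j a => if a then β else (if j then l₁ else l₂) - α,
    fun j b => (if b then γ else (if j then l₁ else l₂) - α) /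
      (((if j then l₁ else l₂) - α) * ((if j then l₁ else l₂) - if j then l₂ else l₁)),
    ?_, ?_, ?_, ?_, ?_⟩
  · intro a b
    cases a <;> cases b <;>
      simp only [Fintype.sum_bool, if_true, Bool.false_eq_true, if_false] <;> field_simp
    · linear_combination (l₁ - l₂) * (l₂ - l₁) * (htr - hsum)
    · ring
    · ring
    · linear_combination -α * (l₂ - l₁) ^ 2 * hroot
  · intro j k
    cases j <;> cases k <;> simp only [Fintype.sum_bool, if_true, Bool.false_eq_true, if_false,
      Bool.true_eq_false] <;> field_simp <;> linear_combination hroot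
  · intro j
    cases j <;> simp only [if_true, Bool.false_eq_true, if_false] <;> linarith
  · simp only [Fintype.sum_bool, if_true, Bool.false_eq_true, if_false]
    exact hsum
  · simp only [Fintype.sum_bool, if_true, Bool.false_eq_true, if_false]
    linear_combination (l₁ + l₂ + 1) * hsum - 2 * hprod

section Chernoff

variable {S : Type*} [Fintype S] [DecidableEq S] {z : ℝ}

def tilt (z : ℝ) (a b : Bool) : ℝ := if a = b then 1 else z

/-- The Chernoff weight `P a c * z ^ ([b ≠ c] - [a ≠ c])` of one vertex pair, summed over the
value `c` of `G_b` on it, when `G_a` takes the values `a` on the pair and `b` on its image. -/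
noncomputable def tiltedKernel (P : Bool → Bool → ℝ) (z : ℝ) (a b : Bool) : ℝ :=
  ∑ c, P a c * tilt z b c / tilt z a c

theorem pow_hamming_eq_prod_tilt (z : ℝ) (f g : S → Bool) :
    z ^ hamming f g = ∏ e, tilt z (f e) (g e) := by
  simp [hamming, tilt, prod_ite]

theorem indicator_deltaQ_nonpos_le (τ : Equiv.Perm S) (f g : S → Bool) (hz0 : 0 < z)
    (hz1 : z ≤ 1) :
    (if deltaQ τ f g ≤ 0 then (1 : ℝ) else 0) ≤ z ^ hamming (f ∘ τ) g / z ^ hamming f g := by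
  split_ifs with h
  · have hle : hamming (f ∘ τ) g ≤ hamming f g := by
      have : (hamming (f ∘ τ) g : ℚ) ≤ hamming f g := by rw [deltaQ] at h; linarith
      exact_mod_cast this
    rw [one_le_div (by positivity)]
    exact pow_le_pow_of_le_one hz0.le hz1 hle
  · positivity

theorem sum_indicator_deltaQ_nonpos_le (τ : Equiv.Perm S) (P : Bool → Bool → ℝ)
    (hP : ∀ a b, 0 ≤ P a b) (hz0 : 0 < z) (hz1 : z ≤ 1) :
    ∑ fg : (S → Bool) × (S → Bool),
        (if deltaQ τ fg.1 fg.2 ≤ 0 then (1 : ℝ) else 0) * ∏ e, P (fg.1 e) (fg.2 e)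
      ≤ ∑ f : S → Bool, ∏ e, tiltedKernel P z (f e) (f (τ e)) := by
  rw [Fintype.sum_prod_type]
  refine sum_le_sum fun f _ => ?_
  calc ∑ g : S → Bool, (if deltaQ τ f g ≤ 0 then (1 : ℝ) else 0) * ∏ e, P (f e) (g e)
      ≤ ∑ g : S → Bool, ∏ e, P (f e) (g e) * tilt z (f (τ e)) (g e) / tilt z (f e) (g e) := by
        refine sum_le_sum fun g _ => ?_
        rw [prod_div_distrib, prod_mul_distrib, mul_div_assoc, ← pow_hamming_eq_prod_tilt,
          ← pow_hamming_eq_prod_tilt, mul_comm (∏ e, P (f e) (g e))]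
        exact mul_le_mul_of_nonneg_right (indicator_deltaQ_nonpos_le τ f g hz0 hz1)
          (prod_nonneg fun e _ => hP _ _)
    _ = ∏ e, tiltedKernel P z (f e) (f (τ e)) :=
        (Fintype.prod_sum fun e c => P (f e) c * tilt z (f (τ e)) c / tilt z (f e) c).symm

end Chernoff

theorem exists_tilt_parameter {A B : ℝ} (hB : 0 ≤ B) (hBA : B < A) (hA : A ≤ 1) :
    ∃ z : ℝ, 0 < z ∧ z ≤ 1 ∧ 0 ≤ A + B - A * z ^ 2 - B / z ^ 2 ∧
      1 - 2 * (A + B - A * z ^ 2 - B / z ^ 2) ≤ Real.exp (-(2 * (√A - √B) ^ 2)) := by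
  have hA0 : 0 < A := hB.trans_lt hBA
  rcases hB.eq_or_lt with rfl | hB0
  · -- with `z ^ 2 = A / 2` the bound reads `(1 - A) ^ 2 ≤ exp (-A) ^ 2`
    have hz2 : √(A / 2) ^ 2 = A / 2 := Real.sq_sqrt (by positivity)
    refine ⟨√(A / 2), by positivity, Real.sqrt_le_one.mpr (by linarith), ?_, ?_⟩
    · rw [hz2, zero_div, add_zero, sub_zero]; nlinarith
    · have hexp : 1 - A ≤ Real.exp (-A) := by linarith [Real.add_one_le_exp (-A)]
      have hsq : Real.exp (-(2 * (√A - √0) ^ 2)) = Real.exp (-A) * Real.exp (-A) := by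
        rw [← Real.exp_add, Real.sqrt_zero, sub_zero, Real.sq_sqrt hA0.le]; ring_nf
      rw [hz2, hsq, zero_div, add_zero, sub_zero]
      nlinarith [mul_le_mul hexp hexp (by linarith) (Real.exp_pos _).le]
  · -- with `z ^ 2 = √B / √A` the two tilted terms balance and the expression is `(√A - √B) ^ 2`
    have hsA : 0 < √A := Real.sqrt_pos.mpr hA0
    have hsB : 0 < √B := Real.sqrt_pos.mpr hB0
    have hz2 : √(√B / √A) ^ 2 = √B / √A := Real.sq_sqrt (by positivity)
    have hdet : A + B - A * √(√B / √A) ^ 2 - B / √(√B / √A) ^ 2 = (√A - √B) ^ 2 := by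
      rw [hz2]
      field_simp
      linear_combination (√B ^ 2 - √A * √B) * Real.sq_sqrt hA0.le
        + (√A ^ 2 - √A * √B) * Real.sq_sqrt hB
    refine ⟨√(√B / √A), by positivity, ?_, by rw [hdet]; positivity, ?_⟩
    · exact Real.sqrt_le_one.mpr ((div_le_one hsA).mpr (Real.sqrt_le_sqrt hBA.le))
    · rw [hdet]
      linarith [Real.add_one_le_exp (-(2 * (√A - √B) ^ 2))]

section ErdosRenyi

variable {p11 p10 p01 p00 : ℝ}

theorem pv_nonneg (h11 : 0 ≤ p11) (h10 : 0 ≤ p10) (h01 : 0 ≤ p01) (h00 : 0 ≤ p00)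
    (a b : Bool) : 0 ≤ pv p11 p10 p01 p00 a b := by
  cases a <;> cases b <;> assumption

theorem tiltedKernel_pv {z : ℝ} (hz : z ≠ 0) :
    tiltedKernel (pv p11 p10 p01 p00) z = fun a b =>
      if a then (if b then p11 + p10 else p11 * z + p10 / z)
      else (if b then p01 / z + p00 * z else p01 + p00) := by
  funext a b
  cases a <;> cases b <;> simp [tiltedKernel, tilt, pv, hz]

theorem exists_tiltedKernel_pv (h11 : 0 ≤ p11) (h10 : 0 ≤ p10) (h01 : 0 ≤ p01) (h00 : 0 ≤ p00)
    (hsum : p11 + p10 + p01 + p00 = 1) (hcorr : p01 * p10 < p11 * p00) :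
    ∃ z : ℝ, 0 < z ∧ z ≤ 1 ∧
      let M := tiltedKernel (pv p11 p10 p01 p00) z
      M true true + M false false = 1 ∧ 0 < M true false * M false true ∧ 0 ≤ det2 M ∧
        1 - 2 * det2 M ≤ Real.exp (-(2 * (√(p11 * p00) - √(p01 * p10)) ^ 2)) := by
  have hA : p11 * p00 ≤ 1 := by nlinarith [sq_nonneg (p11 - p00)]
  obtain ⟨z, hz0, hz1, hdet, hexp⟩ := exists_tilt_parameter (mul_nonneg h01 h10) hcorr hA
  obtain ⟨hp11, hp00⟩ : 0 < p11 ∧ 0 < p00 := by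
    constructor <;> by_contra! h <;> nlinarith [mul_nonneg h01 h10]
  have hdet_eq : det2 (tiltedKernel (pv p11 p10 p01 p00) z)
      = p11 * p00 + p01 * p10 - p11 * p00 * z ^ 2 - p01 * p10 / z ^ 2 := by
    simp only [tiltedKernel_pv hz0.ne', det2, if_true, Bool.false_eq_true, if_false]
    field_simp
    ring
  refine ⟨z, hz0, hz1, ?_, ?_, hdet_eq ▸ hdet, hdet_eq ▸ hexp⟩ <;>
    simp only [tiltedKernel_pv hz0.ne', if_true, Bool.false_eq_true, if_false]
  · linarith
  · positivity

end ErdosRenyi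

theorem card_support_mul_le_card_support_pairPerm {n : ℕ} (π : Equiv.Perm (Fin n)) :
    #π.support * (n - 2) ≤ #(pairPerm π).support * 2 := by
  classical
  refine card_mul_le_card_mul (fun i (e : VPairs n) => i ∈ e.val) (fun i hi => ?_) fun e _ => ?_
  · have hi : π i ≠ i := Equiv.Perm.mem_support.mp hi
    -- the pairs `{i, j}` with `j ∉ {i, π i}` are moved by `π`
    let edge (j : Fin n) : VPairs n :=
      if h : i = j then ⟨s(i, π i), by simpa using hi.symm⟩ else ⟨s(i, j), by simpa using h⟩
    calc n - 2 = #({i, π i}ᶜ : Finset (Fin n)) := by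
          rw [card_compl, card_pair hi.symm, Fintype.card_fin]
      _ ≤ _ := by
        refine card_le_card_of_injOn edge (fun j hj => ?_) fun j hj j' hj' hjj' => ?_
        · simp only [coe_compl, coe_pair, Set.mem_compl_iff, Set.mem_insert_iff,
            Set.mem_singleton_iff, not_or] at hj
          simp only [edge, dif_neg (Ne.symm hj.1), bipartiteAbove, coe_filter,
            Equiv.Perm.mem_support, Set.mem_ofPred_eq, Sym2.mem_mk_left, and_true]
          intro hfix
          rcases Sym2.eq_iff.mp (congrArg Subtype.val hfix) with ⟨h, -⟩ | ⟨h, -⟩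
          · exact hi h
          · exact hj.2 h.symm
        · simp only [coe_compl, coe_pair, Set.mem_compl_iff, Set.mem_insert_iff,
            Set.mem_singleton_iff, not_or] at hj hj'
          simp only [edge, dif_neg (Ne.symm hj.1), dif_neg (Ne.symm hj'.1)] at hjj'
          rcases Sym2.eq_iff.mp (congrArg Subtype.val hjj') with ⟨-, h⟩ | ⟨h, -⟩
          · exact h
          · exact absurd h.symm hj'.1
  · calc #(bipartiteBelow _ _ e) ≤ #e.val.toFinset :=
          card_le_card fun i hi => Sym2.mem_toFinset.mpr (mem_filter.mp hi).2
      _ = 2 := Sym2.card_toFinset_of_not_isDiag _ e.prop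

theorem cast_card_support_mul_sub_two_le {n : ℕ} (π : Equiv.Perm (Fin n)) :
    (#π.support : ℝ) * ((n : ℝ) - 2) ≤ 2 * #(pairPerm π).support := by
  rcases le_or_gt 2 n with hn | hn
  · have h := card_support_mul_le_card_support_pairPerm π
    rw [← Nat.cast_le (α := ℝ)] at h
    push_cast [Nat.cast_sub hn] at h
    linarith
  · have : (n : ℝ) - 2 < 0 := by
      rw [sub_neg]; exact_mod_cast hn
    nlinarith [(#π.support).cast_nonneg (α := ℝ), (#(pairPerm π).support).cast_nonneg (α := ℝ)]

/-- the upper bound on `P[δ(l(π)) ≤ 0]` (Lemma 9). -/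
theorem delta_le_zero_prob_bound
    (n : ℕ) (p11 p10 p01 p00 : ℝ)
    (hpos : 0 ≤ p11 ∧ 0 ≤ p10 ∧ 0 ≤ p01 ∧ 0 ≤ p00)
    (hsum : p11 + p10 + p01 + p00 = 1)
    (hcorr : p01 * p10 < p11 * p00)
    (nt : ℕ) (π : Equiv.Perm (Fin n)) (hπ : π ∈ Snn n nt) :
    ERprob n (pv p11 p10 p01 p00)
        (fun gab => deltaQ (pairPerm π) gab.1 gab.2 ≤ 0)
      ≤ Real.exp (-(1 / 2) * nt * ((n : ℝ) - 2) *
          (Real.sqrt (p11 * p00) - Real.sqrt (p01 * p10)) ^ 2) := by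
  obtain ⟨h11, h10, h01, h00⟩ := hpos
  obtain ⟨z, hz0, hz1, htr, hoff, hdet, hexp⟩ :=
    exists_tiltedKernel_pv h11 h10 h01 h00 hsum hcorr
  obtain ⟨l, u, w, hM, horth, hl0, hl1, hl2⟩ := exists_eigen_decomposition _ htr hoff hdet
  set D := √(p11 * p00) - √(p01 * p10)
  have hl2' : ∑ j, l j ^ 2 ≤ Real.exp (-D ^ 2) ^ 2 := by
    rw [hl2, ← Real.exp_nat_mul]
    convert hexp using 2
    ring
  have hnt : #π.support = nt := (mem_filter.mp hπ).2
  calc ERprob n (pv p11 p10 p01 p00) (fun gab => deltaQ (pairPerm π) gab.1 gab.2 ≤ 0)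
      ≤ ∑ f : VGraph n, ∏ e, tiltedKernel (pv p11 p10 p01 p00) z (f e) (f (pairPerm π e)) := by
        unfold ERprob
        convert sum_indicator_deltaQ_nonpos_le (pairPerm π) _ (pv_nonneg h11 h10 h01 h00)
          hz0 hz1
    _ = ∑ ε : VPairs n → Bool with ∀ e, ε (pairPerm π e) = ε e, ∏ e, l (ε e) :=
        sum_prod_apply_perm_eq_sum_invariant _ _ l u w hM horth
    _ ≤ Real.exp (-D ^ 2) ^ #(pairPerm π).support :=
        sum_invariant_prod_le _ hl0 hl1 (Real.exp_pos _).le hl2'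
    _ ≤ Real.exp (-(1 / 2) * nt * ((n : ℝ) - 2) * D ^ 2) := by
        rw [← Real.exp_nat_mul, Real.exp_le_exp, ← hnt]
        nlinarith [cast_card_support_mul_sub_two_le π, sq_nonneg D]
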